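/- Let W(s) = (1/4)(1 - s^2)^2, q(t) = tanh(t/√2), and fix σ ∈ (0,1) and δ > 0. Let η ∈ C^∞(ℝ) satisfy 0 ≤ η ≤ 1, η(r) = 1 for |r| ≤ 1, η(r) = 0 for |r| ≥ 2, and η(r) = η(-r). For ε > 0 define q_ε(t) := η(2t/δ) q(t/ε) + sgn(t) (1 − η(2t/δ)). Then for every natural number k, ε^{-k} · ∫_{{ ε^{1-σ/2} < |t| < δ }} ( (ε/2) q_ε'(t)^2 + (1/ε) W(q_ε(t)) ) dt → 0 as ε → 0⁺; i.e., the outer tail of the energy of the truncated optimal profile vanishes faster than any power of ε. -/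

import Mathlib

open Filter Topology MeasureTheory

/-- The double-well potential `W(s) = (1/4)(1-s²)²`. -/
noncomputable def W (s : ℝ) : ℝ := (1 / 4) * (1 - s ^ 2) ^ 2

/-- The optimal one-dimensional profile `q(t) = tanh(t/√2)`. -/
noncomputable def q (t : ℝ) : ℝ := Real.tanh (t / Real.sqrt 2)

/-- The truncated optimal profile `q_ε(t) = η(2t/δ) q(t/ε) + sgn(t)(1 - η(2t/δ))`. -/
noncomputable def qeps (η : ℝ → ℝ) (δ ε t : ℝ) : ℝ :=
  η (2 * t / δ) * q (t / ε) + Real.sign t * (1 - η (2 * t / δ))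

lemma hasDerivAt_tanh (x : ℝ) : HasDerivAt Real.tanh (1 - Real.tanh x ^ 2) x := by
  have hc : Real.cosh x ≠ 0 := (Real.cosh_pos x).ne'
  have h := (Real.hasDerivAt_sinh x).div (Real.hasDerivAt_cosh x) hc
  have heq : Real.tanh = fun y => Real.sinh y / Real.cosh y := by
    funext y; exact Real.tanh_eq_sinh_div_cosh y
  rw [heq]
  refine h.congr_deriv ?_
  have h2 := Real.cosh_sq_sub_sinh_sq x
  beta_reduce
  rw [div_pow, one_sub_div (pow_ne_zero 2 hc)]
  congr 1; ring

lemma hasDerivAt_q (t : ℝ) : HasDerivAt q ((1 - q t ^ 2) / Real.sqrt 2) t := by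
  have hs : (Real.sqrt 2) ≠ 0 := by positivity
  have h := (hasDerivAt_tanh (t / Real.sqrt 2)).comp t ((hasDerivAt_id t).div_const (Real.sqrt 2))
  exact h.congr_deriv (by simp [q, div_eq_mul_inv])

lemma abs_tanh_lt_one (x : ℝ) : |Real.tanh x| < 1 := by
  rw [Real.tanh_eq_sinh_div_cosh, abs_div, abs_of_pos (Real.cosh_pos x),
    div_lt_one (Real.cosh_pos x)]
  nlinarith [Real.cosh_sq_sub_sinh_sq x, Real.cosh_pos x, abs_nonneg (Real.sinh x),
    sq_abs (Real.sinh x)]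

lemma one_sub_tanh_le (x : ℝ) : 1 - Real.tanh x ≤ 2 * Real.exp (-2 * x) := by
  have ha : (0:ℝ) < Real.exp x := Real.exp_pos x
  have hb : (0:ℝ) < Real.exp (-x) := Real.exp_pos _
  have key : Real.tanh x = (Real.exp x - Real.exp (-x)) / (Real.exp x + Real.exp (-x)) := by
    rw [Real.tanh_eq_sinh_div_cosh, Real.sinh_eq, Real.cosh_eq]
    have h2 : (2:ℝ) ≠ 0 := by norm_num
    field_simp
  have e1 : 1 - Real.tanh x = 2 * Real.exp (-x) / (Real.exp x + Real.exp (-x)) := by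
    rw [key]; field_simp; ring
  have e2 : 2 * Real.exp (-2 * x) = 2 * Real.exp (-x) / Real.exp x := by
    rw [div_eq_mul_inv, ← Real.exp_neg, mul_assoc, ← Real.exp_add]; ring_nf
  rw [e1, e2]
  apply div_le_div_of_nonneg_left (by positivity) ha (by linarith)

lemma abs_q_le_one (x : ℝ) : |q x| ≤ 1 := (abs_tanh_lt_one _).le

lemma sqrt2_pos : (0:ℝ) < Real.sqrt 2 := by positivity

lemma two_div_sqrt2 (x : ℝ) : -2 * (x / Real.sqrt 2) = -(Real.sqrt 2 * x) := by
  have h2 : Real.sqrt 2 * Real.sqrt 2 = 2 := Real.mul_self_sqrt (by norm_num)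
  field_simp
  linear_combination x * h2

lemma one_sub_q_le (x : ℝ) : 1 - q x ≤ 2 * Real.exp (-(Real.sqrt 2 * x)) := by
  have := one_sub_tanh_le (x / Real.sqrt 2)
  rwa [two_div_sqrt2] at this

lemma q_neg (x : ℝ) : q (-x) = - q x := by
  simp [q, neg_div, Real.tanh_neg]

lemma one_sub_q_sq_nonneg (x : ℝ) : 0 ≤ 1 - q x ^ 2 := by
  have h := abs_le.1 (abs_q_le_one x)
  nlinarith

lemma one_sub_q_sq_le (x : ℝ) : 1 - q x ^ 2 ≤ 4 * Real.exp (-(Real.sqrt 2 * |x|)) := by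
  have key : ∀ y : ℝ, 0 ≤ y → 1 - q y ^ 2 ≤ 4 * Real.exp (-(Real.sqrt 2 * y)) := by
    intro y hy
    have h1 := one_sub_q_le y
    have h2 := abs_q_le_one y
    have h2' := abs_le.1 h2
    have hE : 0 < Real.exp (-(Real.sqrt 2 * y)) := Real.exp_pos _
    nlinarith
  rcases abs_choice x with h | h
  · rw [h]; exact key x (h ▸ abs_nonneg x)
  · have h0 := key (-x) (h ▸ abs_nonneg x)
    rw [q_neg] at h0
    rw [h]
    nlinarith

lemma abs_q_sub_sign_le (x : ℝ) (hx : x ≠ 0) :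
    |q x - Real.sign x| ≤ 2 * Real.exp (-(Real.sqrt 2 * |x|)) := by
  rcases hx.lt_or_gt with h | h
  · rw [Real.sign_of_neg h, abs_of_neg h]
    have h1 := one_sub_q_le (-x)
    have h2 := abs_le.1 (abs_q_le_one x)
    rw [q_neg] at h1
    rw [abs_le]
    constructor <;> nlinarith [Real.exp_pos (-(Real.sqrt 2 * -x))]
  · rw [Real.sign_of_pos h, abs_of_pos h]
    have h1 := one_sub_q_le x
    have h2 := abs_le.1 (abs_q_le_one x)
    rw [abs_le]
    constructor <;> nlinarith [Real.exp_pos (-(Real.sqrt 2 * x))]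

lemma eta_deriv_bound (η : ℝ → ℝ) (hη : ContDiff ℝ (⊤ : ℕ∞) η) (hη0 : ∀ r : ℝ, 2 ≤ |r| → η r = 0) :
    ∃ M : ℝ, 0 ≤ M ∧ ∀ r, |deriv η r| ≤ M := by
  have hcont : Continuous (deriv η) := hη.continuous_deriv (by simp)
  have hzero : ∀ r : ℝ, 3 ≤ |r| → deriv η r = 0 := by
    intro r hr
    have hopen : IsOpen {u : ℝ | 2 < |u|} := isOpen_lt continuous_const continuous_abs
    have hmem : r ∈ {u : ℝ | 2 < |u|} := by simp only [Set.mem_setOf_eq]; linarith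
    have hev : η =ᶠ[𝓝 r] fun _ => (0:ℝ) :=
      eventually_of_mem (hopen.mem_nhds hmem) fun u hu => hη0 u (le_of_lt hu)
    rw [hev.deriv_eq]
    simp
  obtain ⟨M, hM⟩ := (isCompact_Icc : IsCompact (Set.Icc (-3:ℝ) 3)).exists_bound_of_continuousOn
    hcont.continuousOn
  refine ⟨max M 0, le_max_right _ _, fun r => ?_⟩
  rcases le_or_gt |r| 3 with h | h
  · have hr : r ∈ Set.Icc (-3:ℝ) 3 := by
      rcases abs_le.1 h with ⟨h1, h2⟩; exact ⟨h1, h2⟩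
    have := hM r hr
    rw [Real.norm_eq_abs] at this
    exact this.trans (le_max_left _ _)
  · rw [hzero r h.le]
    simpa using le_max_right M 0

lemma qeps_hasDerivAt {η : ℝ → ℝ} (hη : ContDiff ℝ (⊤ : ℕ∞) η) {δ ε t : ℝ} (ht : t ≠ 0) :
    HasDerivAt (qeps η δ ε)
      (deriv η (2 * t / δ) * (2 / δ) * (q (t / ε) - Real.sign t) +
        η (2 * t / δ) * ((1 - q (t / ε) ^ 2) / Real.sqrt 2 * (1 / ε))) t := by
  set s : ℝ := Real.sign t with hs
  have hloc : ∀ᶠ u in 𝓝 t, Real.sign u = s := by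
    rcases ht.lt_or_gt with h | h
    · filter_upwards [Iio_mem_nhds h] with u hu
      rw [Real.sign_of_neg hu, hs, Real.sign_of_neg h]
    · filter_upwards [Ioi_mem_nhds h] with u hu
      rw [Real.sign_of_pos hu, hs, Real.sign_of_pos h]
  have h1 : HasDerivAt (fun u : ℝ => 2 * u / δ) (2 / δ) t := by
    simpa using ((hasDerivAt_id t).const_mul 2).div_const δ
  have hηd : HasDerivAt (fun u : ℝ => η (2 * u / δ)) (deriv η (2 * t / δ) * (2 / δ)) t :=
    ((hη.differentiable (by simp)).differentiableAt.hasDerivAt).comp t h1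
  have h2 : HasDerivAt (fun u : ℝ => u / ε) (1 / ε) t := by
    simpa [one_div] using (hasDerivAt_id t).div_const ε
  have hqd : HasDerivAt (fun u : ℝ => q (u / ε)) ((1 - q (t / ε) ^ 2) / Real.sqrt 2 * (1 / ε)) t :=
    by have := (hasDerivAt_q (t / ε)).comp t h2; exact this
  have hg : HasDerivAt (fun u : ℝ => η (2 * u / δ) * (q (u / ε) - s) + s)
      (deriv η (2 * t / δ) * (2 / δ) * (q (t / ε) - s) +
        η (2 * t / δ) * ((1 - q (t / ε) ^ 2) / Real.sqrt 2 * (1 / ε))) t := by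
    simpa using (hηd.mul (hqd.sub_const s)).add_const s
  refine hg.congr_of_eventuallyEq ?_
  filter_upwards [hloc] with u hu
  simp only [qeps, hu]
  ring

lemma one_sub_qeps_sq (η : ℝ → ℝ) (hη01 : ∀ r, η r ∈ Set.Icc (0:ℝ) 1) {δ ε t : ℝ}
    (hε : 0 < ε) (ht : t ≠ 0) :
    0 ≤ 1 - (qeps η δ ε t) ^ 2 ∧
      1 - (qeps η δ ε t) ^ 2 ≤ 4 * Real.exp (-(Real.sqrt 2 * (|t| / ε))) := by
  obtain ⟨ha0, ha1⟩ := hη01 (2 * t / δ)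
  obtain ⟨hv0, hv1⟩ := abs_le.1 (abs_q_le_one (t / ε))
  have hEpos : 0 < Real.exp (-(Real.sqrt 2 * (|t| / ε))) := Real.exp_pos _
  rcases ht.lt_or_gt with h | h
  · have hsign : Real.sign t = -1 := Real.sign_of_neg h
    have habs : |t| = -t := abs_of_neg h
    have h1v : 1 + q (t / ε) ≤ 2 * Real.exp (-(Real.sqrt 2 * (|t| / ε))) := by
      have := one_sub_q_le (-(t / ε))
      rw [q_neg] at this
      rw [habs, neg_div]
      linarith
    simp only [qeps, hsign]
    have hq1 : η (2 * t / δ) * q (t / ε) + (-1) * (1 - η (2 * t / δ)) ≤ 1 := by nlinarith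
    have hq2 : -1 ≤ η (2 * t / δ) * q (t / ε) + (-1) * (1 - η (2 * t / δ)) := by nlinarith
    constructor
    · nlinarith
    · nlinarith
  · have hsign : Real.sign t = 1 := Real.sign_of_pos h
    have habs : |t| = t := abs_of_pos h
    have h1v : 1 - q (t / ε) ≤ 2 * Real.exp (-(Real.sqrt 2 * (|t| / ε))) := by
      have := one_sub_q_le (t / ε)
      rw [habs]
      linarith
    simp only [qeps, hsign]
    have hq1 : η (2 * t / δ) * q (t / ε) + 1 * (1 - η (2 * t / δ)) ≤ 1 := by nlinarith
    have hq2 : -1 ≤ η (2 * t / δ) * q (t / ε) + 1 * (1 - η (2 * t / δ)) := by nlinarith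
    constructor
    · nlinarith
    · nlinarith

lemma pointwise_bound (η : ℝ → ℝ) (hη : ContDiff ℝ (⊤ : ℕ∞) η) (hη01 : ∀ r, η r ∈ Set.Icc (0:ℝ) 1)
    {M δ ε : ℝ} (hM : 0 ≤ M) (hMb : ∀ r, |deriv η r| ≤ M) (hδ : 0 < δ) (hε : 0 < ε)
    (hε1 : ε ≤ 1) {t A : ℝ} (hA : 0 < A) (htA : A ≤ |t| / ε) :
    (ε / 2) * (deriv (qeps η δ ε) t) ^ 2 + (1 / ε) * W (qeps η δ ε t) ≤
      ((4 * M / δ + 4) ^ 2 / 2 + 4) * Real.exp (-(Real.sqrt 2 * A)) ^ 2 / ε := by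
  have ht : t ≠ 0 := by
    intro h; rw [h] at htA; simp at htA; nlinarith
  set E : ℝ := Real.exp (-(Real.sqrt 2 * (|t| / ε))) with hE
  set E0 : ℝ := Real.exp (-(Real.sqrt 2 * A)) with hE0
  have hEpos : 0 < E := Real.exp_pos _
  have hE0pos : 0 < E0 := Real.exp_pos _
  have hEle : E ≤ E0 := by
    apply Real.exp_le_exp.2
    have h2 : (0:ℝ) < Real.sqrt 2 := by positivity
    nlinarith
  have habs : |t / ε| = |t| / ε := by
    rw [abs_div, abs_of_pos hε]
  -- derivative bound
  have hD : deriv (qeps η δ ε) t =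
      deriv η (2 * t / δ) * (2 / δ) * (q (t / ε) - Real.sign t) +
        η (2 * t / δ) * ((1 - q (t / ε) ^ 2) / Real.sqrt 2 * (1 / ε)) :=
    (qeps_hasDerivAt hη ht).deriv
  have hsqrt1 : (1:ℝ) ≤ Real.sqrt 2 := by
    rw [show (1:ℝ) = Real.sqrt 1 by simp]
    exact Real.sqrt_le_sqrt (by norm_num)
  have hq2nn := one_sub_q_sq_nonneg (t / ε)
  have hterm2 : (1 - q (t / ε) ^ 2) / Real.sqrt 2 ≤ 4 * E := by
    have h1 := one_sub_q_sq_le (t / ε)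
    rw [habs] at h1
    exact (div_le_self hq2nn hsqrt1).trans h1
  have htne : t / ε ≠ 0 := by
    intro h
    exact ht (by field_simp at h; simpa using h)
  have hsign_div : Real.sign (t / ε) = Real.sign t := by
    rcases ht.lt_or_gt with h | h
    · rw [Real.sign_of_neg h, Real.sign_of_neg (div_neg_of_neg_of_pos h hε)]
    · rw [Real.sign_of_pos h, Real.sign_of_pos (div_pos h hε)]
  have hqs : |q (t / ε) - Real.sign t| ≤ 2 * E := by
    have := abs_q_sub_sign_le (t / ε) htne
    rw [hsign_div, habs] at this
    exact this
  have heta := hη01 (2 * t / δ)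
  have habs_eta : |η (2 * t / δ)| ≤ 1 := abs_le.2 ⟨by linarith [heta.1], heta.2⟩
  have h1a : |deriv η (2 * t / δ) * (2 / δ) * (q (t / ε) - Real.sign t)| ≤ M * (2 / δ) * (2 * E) := by
    rw [abs_mul, abs_mul, abs_of_pos (show (0:ℝ) < 2 / δ by positivity)]
    have := hMb (2 * t / δ)
    apply mul_le_mul (mul_le_mul this le_rfl (by positivity) hM) hqs (abs_nonneg _) (by positivity)
  have h1b : |η (2 * t / δ) * ((1 - q (t / ε) ^ 2) / Real.sqrt 2 * (1 / ε))| ≤ 4 * E * (1 / ε) := by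
    rw [abs_mul]
    have hval : |(1 - q (t / ε) ^ 2) / Real.sqrt 2 * (1 / ε)| =
        (1 - q (t / ε) ^ 2) / Real.sqrt 2 * (1 / ε) := by
      apply abs_of_nonneg
      apply mul_nonneg (div_nonneg hq2nn (Real.sqrt_nonneg 2)) (by positivity)
    rw [hval]
    calc |η (2 * t / δ)| * ((1 - q (t / ε) ^ 2) / Real.sqrt 2 * (1 / ε))
        ≤ 1 * (4 * E * (1 / ε)) := by
          apply mul_le_mul habs_eta (mul_le_mul_of_nonneg_right hterm2 (by positivity))
            (mul_nonneg (div_nonneg hq2nn (Real.sqrt_nonneg 2)) (by positivity)) one_pos.le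
      _ = 4 * E * (1 / ε) := one_mul _
  set K : ℝ := 4 * M / δ + 4 with hKdef
  have hKpos : 0 < K := by positivity
  have hDabs : |deriv (qeps η δ ε) t| ≤ K / ε * E := by
    rw [hD]
    calc |deriv η (2 * t / δ) * (2 / δ) * (q (t / ε) - Real.sign t) +
          η (2 * t / δ) * ((1 - q (t / ε) ^ 2) / Real.sqrt 2 * (1 / ε))|
        ≤ M * (2 / δ) * (2 * E) + 4 * E * (1 / ε) := (abs_add_le _ _).trans (add_le_add h1a h1b)
      _ = (4 * M / δ + 4 / ε) * E := by ring
      _ ≤ K / ε * E := by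
          apply mul_le_mul_of_nonneg_right _ hEpos.le
          rw [hKdef, add_div]
          have : 4 * M / δ ≤ 4 * M / δ / ε :=
            (le_div_iff₀ hε).2 (mul_le_of_le_one_right (by positivity) hε1)
          linarith
  have hD2 : (ε / 2) * (deriv (qeps η δ ε) t) ^ 2 ≤ K ^ 2 / 2 * E ^ 2 / ε := by
    have h := pow_le_pow_left₀ (abs_nonneg _) hDabs 2
    rw [sq_abs] at h
    calc (ε / 2) * (deriv (qeps η δ ε) t) ^ 2 ≤ (ε / 2) * (K / ε * E) ^ 2 :=
          mul_le_mul_of_nonneg_left h (by positivity)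
      _ = K ^ 2 / 2 * E ^ 2 / ε * (ε / ε) := by ring
      _ = K ^ 2 / 2 * E ^ 2 / ε := by rw [div_self hε.ne']; ring
  have hWb : (1 / ε) * W (qeps η δ ε t) ≤ 4 * E ^ 2 / ε := by
    obtain ⟨hw0, hw1⟩ := one_sub_qeps_sq η hη01 hε ht
    have h16 : (1 - (qeps η δ ε t) ^ 2) ^ 2 ≤ (4 * E) ^ 2 := pow_le_pow_left₀ hw0 hw1 2
    have : W (qeps η δ ε t) ≤ 4 * E ^ 2 := by
      unfold W; nlinarith
    calc (1 / ε) * W (qeps η δ ε t) ≤ (1 / ε) * (4 * E ^ 2) :=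
          mul_le_mul_of_nonneg_left this (by positivity)
      _ = 4 * E ^ 2 / ε := by ring
  have hE2 : E ^ 2 ≤ E0 ^ 2 := pow_le_pow_left₀ hEpos.le hEle 2
  calc (ε / 2) * (deriv (qeps η δ ε) t) ^ 2 + (1 / ε) * W (qeps η δ ε t)
      ≤ K ^ 2 / 2 * E ^ 2 / ε + 4 * E ^ 2 / ε := add_le_add hD2 hWb
    _ = (K ^ 2 / 2 + 4) * E ^ 2 / ε := by ring
    _ ≤ (K ^ 2 / 2 + 4) * E0 ^ 2 / ε := by gcongr
    _ = (K ^ 2 / 2 + 4) * E0 ^ 2 / ε := rfl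

/-- The outer tail of the energy of the truncated optimal profile vanishes faster than
any power of `ε`. -/
theorem tail_energy_vanishes (σ δ : ℝ) (hσ : σ ∈ Set.Ioo (0 : ℝ) 1) (hδ : 0 < δ)
    (η : ℝ → ℝ) (hη : ContDiff ℝ (⊤ : ℕ∞) η) (hη01 : ∀ r, η r ∈ Set.Icc (0 : ℝ) 1)
    (hη1 : ∀ r : ℝ, |r| ≤ 1 → η r = 1) (hη0 : ∀ r : ℝ, 2 ≤ |r| → η r = 0)
    (hηsymm : ∀ r : ℝ, η (-r) = η r) (k : ℕ) :
    Tendsto (fun ε : ℝ =>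
        ε ^ (-(k : ℝ)) *
          ∫ t in {t : ℝ | ε ^ (1 - σ / 2) < |t| ∧ |t| < δ},
            ((ε / 2) * (deriv (qeps η δ ε) t) ^ 2 + (1 / ε) * W (qeps η δ ε t)))
      (𝓝[>] (0 : ℝ)) (𝓝 (0 : ℝ)) := by
  obtain ⟨hσ0, hσ1⟩ := hσ
  obtain ⟨M, hM0, hMb⟩ := eta_deriv_bound η hη hη0
  set C : ℝ := (4 * M / δ + 4) ^ 2 / 2 + 4 with hCdef
  have hCpos : 0 < C := by positivity
  set g : ℝ → ℝ := fun ε =>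
    (2 * δ * C) * (ε ^ (-((k : ℝ) + 1)) * Real.exp (-(2 * Real.sqrt 2) * ε ^ (-(σ / 2)))) with hgdef
  -- the dominating function tends to zero
  have hg0 : Tendsto g (𝓝[>] (0:ℝ)) (𝓝 0) := by
    have h1 : Tendsto (fun ε : ℝ => ε ^ (-(σ / 2))) (𝓝[>] (0:ℝ)) atTop := by
      have h := (tendsto_rpow_atTop (y := σ / 2) (by positivity)).comp tendsto_inv_nhdsGT_zero
      apply h.congr'
      filter_upwards [self_mem_nhdsWithin] with ε hε
      have hεpos : (0:ℝ) < ε := hε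
      simp only [Function.comp_apply]
      rw [Real.inv_rpow hεpos.le, ← Real.rpow_neg hεpos.le]
    have h2 := (tendsto_rpow_mul_exp_neg_mul_atTop_nhds_zero (((k : ℝ) + 1) * (2 / σ))
      (2 * Real.sqrt 2) (by positivity)).comp h1
    have h3 : Tendsto (fun ε : ℝ =>
        ε ^ (-((k : ℝ) + 1)) * Real.exp (-(2 * Real.sqrt 2) * ε ^ (-(σ / 2))))
        (𝓝[>] (0:ℝ)) (𝓝 0) := by
      apply h2.congr'
      filter_upwards [self_mem_nhdsWithin] with ε hε
      have hεpos : (0:ℝ) < ε := hε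
      simp only [Function.comp_apply]
      congr 1
      rw [← Real.rpow_mul hεpos.le]
      congr 1
      field_simp
    have := h3.const_mul (2 * δ * C)
    simpa [hgdef] using this
  apply squeeze_zero' ?_ ?_ hg0
  · -- nonnegativity
    filter_upwards [self_mem_nhdsWithin] with ε hε
    have hεpos : (0:ℝ) < ε := hε
    apply mul_nonneg (Real.rpow_nonneg hεpos.le _)
    apply setIntegral_nonneg
    · show MeasurableSet {t : ℝ | ε ^ (1 - σ / 2) < |t| ∧ |t| < δ}
      exact (isOpen_Ioo.preimage continuous_abs).measurableSet
    · intro t _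
      have hW : 0 ≤ W (qeps η δ ε t) := by unfold W; positivity
      have h1 : 0 ≤ (ε / 2) * (deriv (qeps η δ ε) t) ^ 2 := by positivity
      have h2 : 0 ≤ (1 / ε) * W (qeps η δ ε t) := by positivity
      linarith
  · -- upper bound
    filter_upwards [Ioo_mem_nhdsGT_of_mem (Set.mem_Ico.2 ⟨le_refl (0:ℝ), zero_lt_one⟩)]
      with ε hεI
    obtain ⟨hεpos, hε1⟩ := hεI
    set A : ℝ := ε ^ (-(σ / 2)) with hAdef
    have hApos : 0 < A := Real.rpow_pos_of_pos hεpos _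
    set S : Set ℝ := {t : ℝ | ε ^ (1 - σ / 2) < |t| ∧ |t| < δ} with hSdef
    have hSmeas : MeasurableSet S := (isOpen_Ioo.preimage continuous_abs).measurableSet
    have hSsub : S ⊆ Set.Ioo (-δ) δ := fun t ht => abs_lt.1 ht.2
    have hSvol : volume S ≤ ENNReal.ofReal (2 * δ) := by
      calc volume S ≤ volume (Set.Ioo (-δ) δ) := measure_mono hSsub
        _ = ENNReal.ofReal (δ - -δ) := Real.volume_Ioo
        _ = ENNReal.ofReal (2 * δ) := by ring_nf
    have hSfin : volume S < ⊤ := lt_of_le_of_lt hSvol ENNReal.ofReal_lt_top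
    set B : ℝ := C * Real.exp (-(Real.sqrt 2 * A)) ^ 2 / ε with hBdef
    have hBpos : 0 < B := by positivity
    have hbound : ∀ t ∈ S, ‖(ε / 2) * (deriv (qeps η δ ε) t) ^ 2 + (1 / ε) * W (qeps η δ ε t)‖
        ≤ B := by
      intro t ht
      have htA : A ≤ |t| / ε := by
        have h1 : ε ^ (1 - σ / 2) = ε * A := by
          rw [hAdef, show (1 - σ / 2) = 1 + -(σ / 2) by ring, Real.rpow_add hεpos,
            Real.rpow_one]
        have h2 : ε * A < |t| := h1 ▸ ht.1
        rw [le_div_iff₀ hεpos]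
        linarith [h2]
      have hb := pointwise_bound η hη hη01 hM0 hMb hδ hεpos hε1.le hApos htA
      rw [Real.norm_eq_abs, abs_of_nonneg]
      · exact hb
      · have hW : 0 ≤ W (qeps η δ ε t) := by unfold W; positivity
        have h1 : 0 ≤ (ε / 2) * (deriv (qeps η δ ε) t) ^ 2 := by positivity
        have h2 : 0 ≤ (1 / ε) * W (qeps η δ ε t) := by positivity
        linarith
    have hint : ‖∫ t in S, ((ε / 2) * (deriv (qeps η δ ε) t) ^ 2 + (1 / ε) * W (qeps η δ ε t))‖
        ≤ B * (volume S).toReal :=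
      norm_setIntegral_le_of_norm_le_const_ae' hSfin (ae_of_all _ hbound)
    have hvol : (volume S).toReal ≤ 2 * δ :=
      ENNReal.toReal_le_of_le_ofReal (by positivity) hSvol
    have hintle : (∫ t in S, ((ε / 2) * (deriv (qeps η δ ε) t) ^ 2 + (1 / ε) * W (qeps η δ ε t)))
        ≤ B * (2 * δ) := by
      calc (∫ t in S, ((ε / 2) * (deriv (qeps η δ ε) t) ^ 2 + (1 / ε) * W (qeps η δ ε t)))
          ≤ ‖∫ t in S, ((ε / 2) * (deriv (qeps η δ ε) t) ^ 2 + (1 / ε) * W (qeps η δ ε t))‖ :=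
            le_abs_self _
        _ ≤ B * (volume S).toReal := hint
        _ ≤ B * (2 * δ) := mul_le_mul_of_nonneg_left hvol hBpos.le
    calc ε ^ (-(k : ℝ)) *
          (∫ t in S, ((ε / 2) * (deriv (qeps η δ ε) t) ^ 2 + (1 / ε) * W (qeps η δ ε t)))
        ≤ ε ^ (-(k : ℝ)) * (B * (2 * δ)) :=
          mul_le_mul_of_nonneg_left hintle (Real.rpow_nonneg hεpos.le _)
      _ = g ε := by
          have he : Real.exp (-(Real.sqrt 2 * A)) ^ 2 = Real.exp (-(2 * Real.sqrt 2) * A) := by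
            rw [sq, ← Real.exp_add]; ring_nf
          have hr : ε ^ (-((k : ℝ) + 1)) = ε ^ (-(k : ℝ)) * ε⁻¹ := by
            rw [show -((k : ℝ) + 1) = -(k : ℝ) + -1 by ring, Real.rpow_add hεpos,
              Real.rpow_neg_one]
          show ε ^ (-(k : ℝ)) * (B * (2 * δ)) =
            2 * δ * C * (ε ^ (-((k : ℝ) + 1)) * Real.exp (-(2 * Real.sqrt 2) * A))
          rw [hBdef, hr, he]
          field_simp
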